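/- arXiv:1004.3411 — 2 statements merged into one kernel-verified Lean document; each statement's English description precedes it below -/
import Mathlib

section
/- Let Δ = conv(v₁,…,v_{2d}) ⊂ ℝ^{2d-1} be a (2d-1)-dimensional lattice simplex whose codimension-1 facets are basic lattice simplices, and suppose Int(kΔ) ∩ ℤ^{2d-1} = ∅ for k = 1,…,d-1. Then the h*-polynomial of Δ is 1 + (n-1)t^d for some integer n ≥ 1; equivalently, the half-open parallelepiped Par(Δ) = {∑λᵢ(vᵢ,1) : 0 ≤ λᵢ < 1} ⊂ ℝ^{2d} contains no lattice points with last coordinate in {1,…,d-1} or {d+1,…,2d-1}. -/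
/-!
Let `p = ∑ lᵢ (vᵢ, 1)` be a lattice point of `Par(Δ)` at height `k = ∑ lᵢ`. If some weight `lⱼ`
vanishes, then `∑ lᵢ vᵢ - k v_{i₀}` is an integer combination of the edge vectors `vᵢ - v_{i₀}` of
the basic facet opposite `vⱼ`, with coefficients the `lᵢ`; so these are integers in `[0, 1)`,
hence `0`, and `p = 0`. Otherwise all weights are positive, so `∑ lᵢ vᵢ` is a lattice point in the
interior of `kΔ` and hollowness forces `k ≥ d`. The complementary point with weights `1 - lᵢ`
lies at height `2d - k`, so also `2d - k ≥ d`, and `k = d`.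
-/

open Pointwise

/-- The codimension-1 facet of the simplex `conv(v 0, …, v (2d-1))` opposite the vertex `v j`
is a basic lattice simplex: the differences of its vertices with respect to one of them
extend to a `ℤ`-basis of `ℤ^{2d-1}`. -/
def FacetBasic (d : ℕ) (v : Fin (2*d) → Fin (2*d-1) → ℤ) (j : Fin (2*d)) : Prop :=
  ∃ (b : Module.Basis (Fin (2*d-1)) ℤ (Fin (2*d-1) → ℤ)) (i₀ : Fin (2*d))
    (e : {i : Fin (2*d) // i ≠ j ∧ i ≠ i₀} → Fin (2*d-1)),
    i₀ ≠ j ∧ Function.Injective e ∧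
    ∀ i : {i : Fin (2*d) // i ≠ j ∧ i ≠ i₀}, v i.1 - v i₀ = b (e i)

theorem Int.eq_zero_of_cast_mem_Ico {n : ℤ} (h₀ : (0 : ℝ) ≤ n) (h₁ : (n : ℝ) < 1) : n = 0 := by
  rw [← Int.floor_intCast (R := ℝ) n]
  exact Int.floor_eq_zero_iff.mpr ⟨h₀, h₁⟩

theorem Module.Basis.repr_apply_eq_sum_mul {R ι κ : Type*} [CommRing R] [Fintype κ]
    [DecidableEq κ] (b : Module.Basis ι R (κ → R)) (x : κ → R) (i : ι) :
    b.repr x i = ∑ j, x j * b.repr (Pi.single j 1) i := by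
  have hsingle : ∀ j, Pi.single j (x j) = x j • (Pi.single j 1 : κ → R) := fun j => by
    rw [← Pi.single_smul', smul_eq_mul, mul_one]
  conv_lhs => rw [← Finset.univ_sum_single x]
  simp [hsingle]

theorem Module.Basis.coeff_eq_repr_of_sum_eq {S ι κ σ : Type*} [CommRing S] [Fintype κ]
    [Fintype σ] (b : Module.Basis ι ℤ (κ → ℤ)) {e : σ → ι} (he : Function.Injective e)
    {c : σ → S} {z : κ → ℤ} (h : ∀ j, ∑ s, c s * b (e s) j = z j) (s₀ : σ) :
    c s₀ = b.repr z (e s₀) := by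
  classical
  set M : κ → S := fun j => b.repr (Pi.single j 1) (e s₀)
  have hM : ∀ x : κ → ℤ, (b.repr x (e s₀) : S) = ∑ j, x j * M j := fun x => by
    simp [M, b.repr_apply_eq_sum_mul x]
  calc c s₀ = ∑ s, c s * (b.repr (b (e s)) (e s₀) : S) := by
        simp [Finsupp.single_apply, he.eq_iff]
    _ = ∑ j, (∑ s, c s * b (e s) j) * M j := by
        simp only [hM, Finset.mul_sum, Finset.sum_mul]
        rw [Finset.sum_comm]
        simp only [mul_assoc]
    _ = b.repr z (e s₀) := by simp only [h, hM]

theorem Fintype.sum_eq_sum_subtype_ne_ne {ι M : Type*} [Fintype ι] [DecidableEq ι]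
    [AddCommMonoid M] {f : ι → M} {j i₀ : ι} (hj : f j = 0) (hi₀ : f i₀ = 0) :
    ∑ i, f i = ∑ s : {i // i ≠ j ∧ i ≠ i₀}, f s := by
  have hcompl : ∑ s : {i // ¬(i ≠ j ∧ i ≠ i₀)}, f s = 0 := by
    refine Finset.sum_eq_zero fun ⟨i, hi⟩ _ => ?_
    obtain rfl | rfl := not_and_or.mp hi |>.imp not_not.mp not_not.mp
    exacts [hj, hi₀]
  rw [← Fintype.sum_subtype_add_sum_subtype (fun i => i ≠ j ∧ i ≠ i₀) f, hcompl, add_zero]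

theorem FacetBasic.sum_eq_zero {d : ℕ} {v : Fin (2*d) → Fin (2*d-1) → ℤ} {j : Fin (2*d)}
    (hj : FacetBasic d v j) {l : Fin (2*d) → ℝ} (hlj : l j = 0) (hl : ∀ i, 0 ≤ l i ∧ l i < 1)
    {x : Fin (2*d-1) → ℤ} (hx : ∀ k, ∑ i, l i * v i k = x k) {m : ℤ} (hm : ∑ i, l i = m) :
    ∑ i, l i = 0 := by
  obtain ⟨b, i₀, e, -, he, hb⟩ := hj
  have hcomb (k) : ∑ s : {i // i ≠ j ∧ i ≠ i₀}, l s * b (e s) k = (x - m • v i₀) k := by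
    calc ∑ s : {i // i ≠ j ∧ i ≠ i₀}, l s * b (e s) k
          = ∑ s : {i // i ≠ j ∧ i ≠ i₀}, l s * (v s k - v i₀ k) := by simp [← hb]
      _ = ∑ i, l i * (v i k - v i₀ k) :=
          (Fintype.sum_eq_sum_subtype_ne_ne (f := fun i => l i * ((v i k : ℝ) - v i₀ k))
            (by simp [hlj]) (by simp)).symm
      _ = (x - m • v i₀) k := by
          simp [mul_sub, Finset.sum_sub_distrib, ← Finset.sum_mul, hx, hm]
  have hfacet : ∀ i, i ≠ i₀ → l i = 0 := fun i hi₀ => by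
    by_cases hij : i = j
    · rwa [hij]
    have hli := hl i
    rw [b.coeff_eq_repr_of_sum_eq he hcomb ⟨i, hij, hi₀⟩] at hli ⊢
    rw [Int.eq_zero_of_cast_mem_Ico hli.1 hli.2, Int.cast_zero]
  have hli₀ := hl i₀
  rw [← Fintype.sum_eq_single i₀ hfacet, hm] at hli₀
  rw [hm, Int.eq_zero_of_cast_mem_Ico hli₀.1 hli₀.2, Int.cast_zero]

theorem AffineBasis.sum_smul_mem_interior_smul_convexHull {ι E : Type*} [Fintype ι]
    [NormedAddCommGroup E] [NormedSpace ℝ E] (B : AffineBasis ι ℝ E) {l : ι → ℝ}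
    (hl : ∀ i, 0 < l i) :
    ∑ i, l i • B i ∈ interior ((∑ i, l i) • convexHull ℝ (Set.range B)) := by
  have := B.nonempty
  have hk : 0 < ∑ i, l i := Finset.sum_pos (fun i _ => hl i) Finset.univ_nonempty
  set w : ι → ℝ := fun i => l i / ∑ i, l i
  have hw : ∑ i, w i = 1 := by simp [w, ← Finset.sum_div, hk.ne']
  rw [interior_smul₀ hk.ne', B.interior_convexHull]
  refine ⟨Finset.univ.affineCombination ℝ B w, fun i => ?_, ?_⟩
  · rw [B.coord_apply_combination_of_mem (Finset.mem_univ i) hw]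
    exact div_pos (hl i) hk
  · rw [Finset.univ.affineCombination_eq_linear_combination B w hw]
    change (∑ i, l i) • ∑ i, w i • B i = _
    rw [Finset.smul_sum]
    simp [w, smul_smul, mul_div_cancel₀ _ hk.ne']

theorem le_of_sum_eq_of_hollow_multiples {n d : ℕ} {ι : Type*} [Fintype ι]
    (hcard : Fintype.card ι = n + 1) (v : ι → Fin n → ℤ)
    (haff : AffineIndependent ℝ (fun i => fun j => (v i j : ℝ)))
    (hhollow : ∀ k : ℕ, 1 ≤ k → k ≤ d - 1 →
      ∀ x : Fin n → ℤ,
        (fun j => (x j : ℝ)) ∉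
          interior ((k : ℝ) • convexHull ℝ (Set.range fun i => fun j => (v i j : ℝ))))
    {l : ι → ℝ} (hl : ∀ i, 0 < l i) {x : Fin n → ℤ} (hx : ∀ j, ∑ i, l i * v i j = x j)
    {m : ℤ} (hm : ∑ i, l i = m) : (d : ℤ) ≤ m := by
  let B : AffineBasis ι ℝ (Fin n → ℝ) := ⟨_, haff, by
    rw [haff.affineSpan_eq_top_iff_card_eq_finrank_add_one]
    simp [hcard]⟩
  have hmem := B.sum_smul_mem_interior_smul_convexHull hl
  have hpoint : ∑ i, l i • B i = fun j => (x j : ℝ) := by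
    ext j
    simp only [Finset.sum_apply, Pi.smul_apply, smul_eq_mul, ← hx]
    rfl
  have := B.nonempty
  have hm_pos : (0 : ℝ) < m := hm ▸ Finset.sum_pos (fun i _ => hl i) Finset.univ_nonempty
  lift m to ℕ using (Int.cast_pos.mp hm_pos).le
  by_contra hlt
  rw [hpoint, hm] at hmem
  exact hhollow m (by exact_mod_cast hm_pos) (by omega) x hmem

/-- If all codimension-1 facets of the `(2d-1)`-dimensional lattice simplex `Δ` are basic and
the interiors of `kΔ` (`k = 1, …, d-1`) contain no lattice points, then `h*_Δ = 1 + (n-1)t^d`: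
equivalently, the half-open parallelepiped spanned by the vectors `(vᵢ, 1)` contains no lattice
point whose last coordinate lies in `{1, …, d-1} ∪ {d+1, …, 2d-1}`, i.e. any point of it with
integral coordinates has coordinate sum `0` or `d`. -/
theorem hstar_concentrated_of_basic_facets_and_hollow_multiples (d : ℕ) (hd : 1 ≤ d)
    (v : Fin (2*d) → Fin (2*d-1) → ℤ)
    (haff : AffineIndependent ℝ (fun i => fun j => (v i j : ℝ)))
    (hbasic : ∀ j : Fin (2*d), FacetBasic d v j)
    (hhollow : ∀ k : ℕ, 1 ≤ k → k ≤ d - 1 →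
      ∀ x : Fin (2*d-1) → ℤ,
        (fun j => (x j : ℝ)) ∉
          interior ((k : ℝ) • convexHull ℝ (Set.range fun i => fun j => (v i j : ℝ)))) :
    ∀ l : Fin (2*d) → ℝ, (∀ i, 0 ≤ l i ∧ l i < 1) →
      (∀ j, ∃ m : ℤ, ∑ i, l i * (v i j : ℝ) = (m : ℝ)) →
      (∃ m : ℤ, ∑ i, l i = (m : ℝ)) →
      (∑ i, l i = 0 ∨ ∑ i, l i = d) := by
  intro l hl hx ⟨m, hm⟩
  choose x hx using hx
  by_cases hzero : ∃ j, l j = 0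
  · obtain ⟨j, hj⟩ := hzero
    exact Or.inl ((hbasic j).sum_eq_zero hj hl hx hm)
  push Not at hzero
  have hcard : Fintype.card (Fin (2*d)) = 2*d - 1 + 1 := by simp; omega
  have hle : (d : ℤ) ≤ m :=
    le_of_sum_eq_of_hollow_multiples hcard v haff hhollow
      (fun i => (hl i).1.lt_of_ne' (hzero i)) hx hm
  have hle' : (d : ℤ) ≤ 2*d - m :=
    le_of_sum_eq_of_hollow_multiples hcard v haff hhollow (l := fun i => 1 - l i)
      (fun i => sub_pos.2 (hl i).2) (x := ∑ i, v i - x)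
      (fun k => by simp [sub_mul, Finset.sum_sub_distrib, hx])
      (by simp [Finset.sum_sub_distrib, hm])
  right
  rw [hm]
  exact_mod_cast (by omega : m = d)
end

section
/- Let Δ = conv(v₁,…,v_{2d}) ⊂ ℝ^{2d-1} be a (2d-1)-dimensional lattice simplex whose codimension-1 facets are basic and with Int(kΔ) ∩ ℤ^{2d-1} = ∅ for k = 1,…,d-1. If ∑_{i=1}^{2d} λᵢ(vᵢ,1) ∈ ℤ^{2d} with 0 ≤ λᵢ < 1, then either ∑λᵢ = 0 (i.e., all λᵢ = 0) or ∑λᵢ = d, and in the latter case λᵢ ≠ 0 for all i. -/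
/-!
Write `x = ∑ λᵢ vᵢ ∈ ℤ^{2d-1}` and `m = ∑ λᵢ ∈ ℤ`. If some `λⱼ = 0`, then
`x - m v_{i₀} = ∑ λᵢ (vᵢ - v_{i₀})` is a real combination of part of a lattice basis (the edges of
the basic facet opposite `vⱼ`), so each `λᵢ` is an integer in `[0, 1)`, hence zero. If all
`λᵢ > 0`, then `x` lies in the interior of `mΔ` and the lattice point `∑ vᵢ - x` in the interior
of `(2d - m)Δ`; as `0 < m < 2d`, hollowness of `kΔ` for `k < d` forces `m = d`.
-/

open Pointwise

theorem eq_zero_of_eq_intCast_of_mem_Ico {R : Type*} [Ring R] [LinearOrder R]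
    [IsStrictOrderedRing R] {x : R} {n : ℤ} (hn : x = n) (hx : 0 ≤ x ∧ x < 1) : x = 0 := by
  subst hn
  have h0 : (0 : ℤ) ≤ n := by exact_mod_cast hx.1
  have h1 : n < 1 := by exact_mod_cast hx.2
  rw [show n = 0 by omega, Int.cast_zero]

open Matrix in
theorem Module.Basis.coeff_eq_repr_of_intCast_eq_sum {ι κ σ : Type*} [Fintype ι] [Fintype κ]
    [Fintype σ] (b : Module.Basis ι ℤ (κ → ℤ)) {e : σ → ι} (he : Function.Injective e)
    (c : σ → ℝ) (y : κ → ℤ)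
    (hy : (fun k => (y k : ℝ)) = ∑ s, c s • fun k => (b (e s) k : ℝ)) (s : σ) :
    c s = b.repr y (e s) := by
  classical
  -- The integer matrix of `b.repr` acts on `ℝ^κ` and agrees with `b.repr` on lattice points.
  set A : Matrix ι κ ℤ := LinearMap.toMatrix' (b.equivFun : (κ → ℤ) →ₗ[ℤ] ι → ℤ)
  have hA (z : κ → ℤ) :
      A.map (Int.cast : ℤ → ℝ) *ᵥ (fun k => (z k : ℝ)) = fun i => (b.repr z i : ℝ) := by
    funext i
    simpa [A, LinearMap.toMatrix'_mulVec, Function.comp_def] using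
      (RingHom.map_mulVec (Int.castRingHom ℝ) A z i).symm
  have := congrFun (congrArg (A.map (Int.cast : ℤ → ℝ) *ᵥ ·) hy) (e s)
  simp [hA, Matrix.mulVec_sum, Matrix.mulVec_smul, Finsupp.single_apply, he.eq_iff] at this
  exact this.symm

theorem AffineBasis.sum_smul_mem_interior_sum_smul_convexHull {ι E : Type*} [Fintype ι]
    [NormedAddCommGroup E] [NormedSpace ℝ E] (b : AffineBasis ι ℝ E) {w : ι → ℝ}
    (hw : ∀ i, 0 < w i) :
    ∑ i, w i • b i ∈ interior ((∑ i, w i) • convexHull ℝ (Set.range b)) := by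
  have := b.nonempty
  have hpos : 0 < ∑ i, w i := Finset.sum_pos (fun i _ => hw i) Finset.univ_nonempty
  have hw1 : ∑ i, w i / ∑ i, w i = 1 := by rw [← Finset.sum_div, div_self hpos.ne']
  have hcomb : (∑ i, w i)⁻¹ • ∑ i, w i • b i
      = Finset.univ.affineCombination ℝ b (fun i => w i / ∑ i, w i) := by
    rw [Finset.affineCombination_eq_linear_combination _ _ _ hw1, Finset.smul_sum]
    simp only [smul_smul, div_eq_inv_mul]
  rw [interior_smul₀ hpos.ne', Set.mem_smul_set_iff_inv_smul_mem₀ hpos.ne',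
    b.interior_convexHull]
  intro i
  rw [hcomb, b.coord_apply_combination_of_mem (Finset.mem_univ i) hw1]
  exact div_pos (hw i) hpos

theorem FacetBasic.eq_zero {d : ℕ} {v : Fin (2*d) → Fin (2*d-1) → ℤ} {j : Fin (2*d)}
    (hb : FacetBasic d v j) {l : Fin (2*d) → ℝ} (hl : ∀ i, 0 ≤ l i ∧ l i < 1)
    {x : Fin (2*d-1) → ℤ} (hx : (fun k => (x k : ℝ)) = ∑ i, l i • fun k => (v i k : ℝ))
    {m : ℤ} (hm : ∑ i, l i = m) (hj : l j = 0) (i : Fin (2*d)) : l i = 0 := by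
  classical
  obtain ⟨b, i₀, e, -, he, hbe⟩ := hb
  set p : Fin (2*d) → Fin (2*d-1) → ℝ := fun i k => (v i k : ℝ)
  have hy : (fun k => ((x - m • v i₀) k : ℝ))
      = ∑ i : {i // i ≠ j ∧ i ≠ i₀}, l i • fun k => (b (e i) k : ℝ) :=
    calc (fun k => ((x - m • v i₀) k : ℝ)) = ∑ i, l i • (p i - p i₀) := by
          funext k
          have hxk := congrFun hx k
          simp only [Finset.sum_apply, Pi.smul_apply, smul_eq_mul] at hxk
          simp [p, hxk, mul_sub, Finset.sum_sub_distrib, ← Finset.sum_mul, hm]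
      _ = ∑ i ∈ Finset.univ.filter (fun i => i ≠ j ∧ i ≠ i₀), l i • (p i - p i₀) := by
          refine (Finset.sum_filter_of_ne fun i _ hi => ⟨?_, ?_⟩).symm
          · rintro rfl; simp [hj] at hi
          · rintro rfl; simp at hi
      _ = ∑ i : {i // i ≠ j ∧ i ≠ i₀}, l i • (p i - p i₀) :=
          Finset.sum_subtype _ (by simp) _
      _ = _ := by
          refine Finset.sum_congr rfl fun i _ => ?_
          rw [← hbe i]
          funext k
          simp [p]
  have hfacet (i : Fin (2*d)) (hij : i ≠ j) (hii₀ : i ≠ i₀) : l i = 0 :=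
    eq_zero_of_eq_intCast_of_mem_Ico (b.coeff_eq_repr_of_intCast_eq_sum he _ _ hy ⟨i, hij, hii₀⟩)
      (hl i)
  have hi₀ : l i₀ = 0 := by
    refine eq_zero_of_eq_intCast_of_mem_Ico (n := m) ?_ (hl i₀)
    rw [← hm, Finset.sum_eq_single i₀ (fun i _ hii₀ => ?_) (by simp)]
    by_cases hij : i = j
    · rw [hij, hj]
    · exact hfacet i hij hii₀
  by_cases hij : i = j
  · rw [hij, hj]
  by_cases hii₀ : i = i₀
  · rw [hii₀, hi₀]
  exact hfacet i hij hii₀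

theorem AffineBasis.le_of_intCast_eq_sum_smul {ι κ : Type*} [Fintype ι] [Fintype κ]
    (Δ : AffineBasis ι ℝ (κ → ℝ)) {d : ℕ}
    (hhollow : ∀ k : ℕ, 1 ≤ k → k ≤ d - 1 → ∀ z : κ → ℤ,
      (fun j => (z j : ℝ)) ∉ interior ((k : ℝ) • convexHull ℝ (Set.range Δ)))
    {w : ι → ℝ} (hw : ∀ i, 0 < w i) {k : ℕ} (hk : ∑ i, w i = k) {z : κ → ℤ}
    (hz : (fun j => (z j : ℝ)) = ∑ i, w i • Δ i) : d ≤ k := by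
  have := Δ.nonempty
  have hk0 : (0 : ℝ) < k := hk ▸ Finset.sum_pos (fun i _ => hw i) Finset.univ_nonempty
  by_contra! hkd
  refine hhollow k (by exact_mod_cast hk0) (by omega) z ?_
  rw [hz, ← hk]
  exact Δ.sum_smul_mem_interior_sum_smul_convexHull hw

theorem parallelepiped_lattice_points_sum_zero_or_d (d : ℕ) (hd : 1 ≤ d)
    (v : Fin (2*d) → Fin (2*d-1) → ℤ)
    (haff : AffineIndependent ℝ (fun i => fun j => (v i j : ℝ)))
    (hbasic : ∀ j : Fin (2*d), FacetBasic d v j)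
    (hhollow : ∀ k : ℕ, 1 ≤ k → k ≤ d - 1 →
      ∀ x : Fin (2*d-1) → ℤ,
        (fun j => (x j : ℝ)) ∉
          interior ((k : ℝ) • convexHull ℝ (Set.range fun i => fun j => (v i j : ℝ))))
    (l : Fin (2*d) → ℝ) (hl : ∀ i, 0 ≤ l i ∧ l i < 1)
    (hint : ∀ j, ∃ m : ℤ, ∑ i, l i * (v i j : ℝ) = (m : ℝ))
    (hsum : ∃ m : ℤ, ∑ i, l i = (m : ℝ)) :
    (∀ i, l i = 0) ∨ (∑ i, l i = d ∧ ∀ i, l i ≠ 0) := by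
  set p : Fin (2*d) → Fin (2*d-1) → ℝ := fun i j => (v i j : ℝ)
  have hspan : affineSpan ℝ (Set.range p) = ⊤ := by
    rw [haff.affineSpan_eq_top_iff_card_eq_finrank_add_one, Module.finrank_fin_fun]
    simp only [Fintype.card_fin]
    omega
  set Δ : AffineBasis (Fin (2*d)) ℝ (Fin (2*d-1) → ℝ) := ⟨p, haff, hspan⟩
  obtain ⟨x, hx⟩ : ∃ x : Fin (2*d-1) → ℤ, (fun j => (x j : ℝ)) = ∑ i, l i • p i := by
    choose x hx using hint
    exact ⟨x, funext fun j => by simp [p, hx, Finset.sum_apply]⟩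
  obtain ⟨m, hm⟩ := hsum
  by_cases hzero : ∃ j, l j = 0
  · obtain ⟨j, hj⟩ := hzero
    exact Or.inl ((hbasic j).eq_zero hl hx hm hj)
  push Not at hzero
  have hpos (i : Fin (2*d)) : 0 < l i := (hl i).1.lt_of_ne (hzero i).symm
  lift m to ℕ using (by exact_mod_cast hm ▸ Finset.sum_nonneg fun i _ => (hl i).1)
  rw [Int.cast_natCast] at hm
  have hm2d : m ≤ 2 * d := by
    have := Finset.sum_le_card_nsmul Finset.univ l 1 fun i _ => (hl i).2.le
    simp only [hm, Finset.card_univ, Fintype.card_fin, nsmul_eq_mul, mul_one] at this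
    exact_mod_cast this
  have hlow : d ≤ m := Δ.le_of_intCast_eq_sum_smul hhollow hpos hm hx
  -- the complementary weights `1 - l i` yield the lattice point `∑ i, v i - x`
  have hhigh : d ≤ 2 * d - m := by
    refine Δ.le_of_intCast_eq_sum_smul hhollow (w := 1 - l) (z := ∑ i, v i - x)
      (fun i => sub_pos.2 (hl i).2) ?_ ?_
    · simp [Finset.sum_sub_distrib, hm, Nat.cast_sub hm2d]
    · change _ = ∑ i, (1 - l) i • p i
      simp only [Pi.sub_apply, Pi.one_apply, sub_smul, one_smul, Finset.sum_sub_distrib, ← hx]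
      funext j
      simp [p, Finset.sum_apply]
  exact Or.inr ⟨by rw [hm, show m = d by omega], hzero⟩
end
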